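/- arXiv:1709.09549 — 2 statements merged into one kernel-verified Lean document; each statement's English description precedes it below -/
import Mathlib

section
/- For the symbols X₀(x, ξ) = ξ₂ − x₁ξ₃, X₁(x, ξ) = ξ₁ − x₃ξ₃, X₂(x, ξ) = (1+x₁)ξ₃ on ℝ³, hypothesis (H2) holds: for every compact K ⊂ ℝ³ there exists C > 0 such that {X₁, X₀}(x,ξ)² ≤ C∑_{k=0}^{2} X_k(x,ξ)² and {X₂, X₀}(x,ξ)² ≤ C∑_{k=0}^{2} X_k(x,ξ)² for all (x, ξ) ∈ K × ℝ³. -/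
/-!
Both brackets are computed exactly: `{X₁, X₀} = -X₂` and `{X₂, X₀} = 0`. Hence the estimate
holds with `C = 1` on all of `ℝ³ × ℝ³`, uniformly in `x`.
-/

/-- Partial derivative of a real function on `ℝ³` in the `k`-th coordinate direction. -/
noncomputable def pd3 (h : (Fin 3 → ℝ) → ℝ) (k : Fin 3) (y : Fin 3 → ℝ) : ℝ :=
  fderiv ℝ h y (Pi.single k 1)

/-- The Poisson bracket of two functions on `ℝ³ × ℝ³`. -/
noncomputable def poissonBracket3 (f g : (Fin 3 → ℝ) → (Fin 3 → ℝ) → ℝ)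
    (x ξ : Fin 3 → ℝ) : ℝ :=
  ∑ k : Fin 3,
    (pd3 (f x) k ξ * pd3 (fun y => g y ξ) k x - pd3 (fun y => f y ξ) k x * pd3 (g x) k ξ)

theorem fderiv_eval_eq_proj {𝕜 ι : Type*} [NontriviallyNormedField 𝕜] [Fintype ι] (i : ι)
    (y : ι → 𝕜) : fderiv 𝕜 (fun z : ι → 𝕜 => z i) y = ContinuousLinearMap.proj i :=
  (hasFDerivAt_apply i y).fderiv

theorem poissonBracket3_X1_X0 (x ξ : Fin 3 → ℝ) :
    poissonBracket3 (fun x ξ => ξ 0 - x 2 * ξ 2) (fun x ξ => ξ 1 - x 0 * ξ 2) x ξ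
      = -((1 + x 0) * ξ 2) := by
  rw [show -((1 + x 0) * ξ 2) = -ξ 2 + -(ξ 2 * x 0) by ring]
  simp (disch := fun_prop) [poissonBracket3, pd3, Fin.sum_univ_three, fderiv_fun_sub,
    fderiv_const_mul, fderiv_mul_const, fderiv_eval_eq_proj, Pi.single_apply]

theorem poissonBracket3_X2_X0 (x ξ : Fin 3 → ℝ) :
    poissonBracket3 (fun x ξ => (1 + x 0) * ξ 2) (fun x ξ => ξ 1 - x 0 * ξ 2) x ξ = 0 := by
  simp (disch := fun_prop) [poissonBracket3, pd3, fderiv_fun_sub, fderiv_const_mul,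
    fderiv_mul_const, fderiv_eval_eq_proj, Pi.single_apply]

/-- Example 2.4, hypothesis (H2): for every compact `K ⊂ ℝ³` there is `C > 0` with
`{X₁,X₀}² ≤ C ∑ₖ Xₖ²` and `{X₂,X₀}² ≤ C ∑ₖ Xₖ²` on `K × ℝ³`. -/
theorem example_H2_verification :
    let X0 : (Fin 3 → ℝ) → (Fin 3 → ℝ) → ℝ := fun x ξ => ξ 1 - x 0 * ξ 2
    let X1 : (Fin 3 → ℝ) → (Fin 3 → ℝ) → ℝ := fun x ξ => ξ 0 - x 2 * ξ 2
    let X2 : (Fin 3 → ℝ) → (Fin 3 → ℝ) → ℝ := fun x ξ => (1 + x 0) * ξ 2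
    ∀ K : Set (Fin 3 → ℝ), IsCompact K → ∃ C : ℝ, 0 < C ∧
      ∀ x ∈ K, ∀ ξ : Fin 3 → ℝ,
        (poissonBracket3 X1 X0 x ξ) ^ 2
            ≤ C * ((X0 x ξ) ^ 2 + (X1 x ξ) ^ 2 + (X2 x ξ) ^ 2) ∧
        (poissonBracket3 X2 X0 x ξ) ^ 2
            ≤ C * ((X0 x ξ) ^ 2 + (X1 x ξ) ^ 2 + (X2 x ξ) ^ 2) := by
  intro X0 X1 X2 K _
  refine ⟨1, one_pos, fun x _ ξ => ⟨?_, ?_⟩⟩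
  · have h : poissonBracket3 X1 X0 x ξ = -X2 x ξ := poissonBracket3_X1_X0 x ξ
    rw [h, neg_sq, one_mul]
    linarith [sq_nonneg (X0 x ξ), sq_nonneg (X1 x ξ)]
  · rw [poissonBracket3_X2_X0 x ξ, zero_pow two_ne_zero, one_mul]
    positivity
end

section
/- Let Z₀(x, ξ) = ξ₄, Z₁(x, ξ) = ξ₁ + i x₂^k ξ₄, Z₂(x, ξ) = e^{iω(x₁,x₂)} ξ₂ be symbols on ℝ⁴ × ℝ⁴, with ω ∈ C^∞(ℝ²; ℝ). Then the real and imaginary parts of the corresponding vector fields, namely ∂₄, ∂₁, x₂^k ∂₄, cos(ω)∂₂, sin(ω)∂₂, together with their iterated commutators up to length k+1, span ℝ⁴ at every point x ∈ ℝ⁴ with ∂_{x₂}ω(x₁,x₂) ≠ 0; in particular the Hörmander condition holds at step r = k+1. (For k = 0, step 1 suffices.) -/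
/-- The Lie bracket of two vector fields on `ℝ⁴`, viewed as maps `ℝ⁴ → ℝ⁴`. -/
noncomputable def lieBracketVF4 (V W : (Fin 4 → ℝ) → (Fin 4 → ℝ)) :
    (Fin 4 → ℝ) → (Fin 4 → ℝ) :=
  fun x => fderiv ℝ W x (V x) - fderiv ℝ V x (W x)

lemma hasFDeriv_aux (m : ℕ) (f : Fin 4 → ℝ) (x : Fin 4 → ℝ) :
    HasFDerivAt (fun y : Fin 4 → ℝ => (y 1) ^ m • f)
      ((((m : ℝ) * (x 1) ^ (m - 1)) •
        (ContinuousLinearMap.proj 1 : (Fin 4 → ℝ) →L[ℝ] ℝ)).smulRight f) x := by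
  have h1 : HasFDerivAt (fun y : Fin 4 → ℝ => y 1)
      (ContinuousLinearMap.proj 1 : (Fin 4 → ℝ) →L[ℝ] ℝ) x := by
    exact (ContinuousLinearMap.proj 1 :
      (Fin 4 → ℝ) →L[ℝ] ℝ).hasFDerivAt (x := x)
  have h2 : HasFDerivAt (fun y : Fin 4 → ℝ => (y 1) ^ m)
      (((m : ℝ) * (x 1) ^ (m - 1)) • (ContinuousLinearMap.proj 1 : (Fin 4 → ℝ) →L[ℝ] ℝ)) x :=
    (hasDerivAt_pow m (x 1)).comp_hasFDerivAt x h1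
  exact h2.smul_const f

lemma bracket_E2 (m : ℕ) (f : Fin 4 → ℝ) :
    lieBracketVF4 (fun _ => Pi.single 1 1) (fun y : Fin 4 → ℝ => (y 1) ^ m • f)
      = fun x => ((m : ℝ) * (x 1) ^ (m - 1)) • f := by
  funext x
  unfold lieBracketVF4
  rw [(hasFDeriv_aux m f x).fderiv, fderiv_fun_const]
  simp

lemma bracket_V2V3 (k : ℕ) :
    lieBracketVF4 (fun _ : Fin 4 → ℝ => Pi.single 0 1)
      (fun y : Fin 4 → ℝ => (y 1) ^ k • (Pi.single 3 1 : Fin 4 → ℝ)) = 0 := by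
  funext x
  unfold lieBracketVF4
  rw [(hasFDeriv_aux k (Pi.single 3 1) x).fderiv, fderiv_fun_const]
  simp

lemma iter_lemma (k : ℕ) : ∀ j ≤ k,
    ((fun W => lieBracketVF4 (fun _ => Pi.single 1 1) W)^[j]
        (fun x : Fin 4 → ℝ => (x 1) ^ k • (Pi.single 3 1 : Fin 4 → ℝ)))
      = fun x => ((k.descFactorial j : ℝ) * (x 1) ^ (k - j)) •
          (Pi.single 3 1 : Fin 4 → ℝ) := by
  intro j
  induction j with
  | zero => intro _; simp
  | succ j ih =>
    intro hj
    rw [Function.iterate_succ_apply', ih (le_of_lt (Nat.lt_of_succ_le hj))]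
    have h1 : (fun x : Fin 4 → ℝ =>
        ((k.descFactorial j : ℝ) * (x 1) ^ (k - j)) • (Pi.single 3 1 : Fin 4 → ℝ))
        = fun x : Fin 4 → ℝ =>
          (x 1) ^ (k - j) • ((k.descFactorial j : ℝ) • (Pi.single 3 1 : Fin 4 → ℝ)) := by
      funext x; rw [smul_smul, mul_comm]
    rw [h1, bracket_E2]
    funext x
    have he : k - (j + 1) = k - j - 1 := by omega
    rw [smul_smul, Nat.descFactorial_succ, he]
    congr 1
    push_cast
    ring

/-- Hörmander condition for the example with symbols `Z₀ = ξ₄`, `Z₁ = ξ₁ + i x₂^k ξ₄`,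
`Z₂ = e^{iω(x₁,x₂)} ξ₂`: the real and imaginary parts of the corresponding vector
fields are `∂₄, ∂₁, x₂^k ∂₄, cos(ω)∂₂, sin(ω)∂₂`. At every point, `∂₂` lies in the span
of `cos(ω)∂₂` and `sin(ω)∂₂`; `[∂₁, x₂^k∂₄] = 0`; bracketing `x₂^k ∂₄` with `∂₂`
`k` times yields `k! ∂₄`; and hence `∂₁, ∂₂, ∂₄` belong to the Lie algebra
`𝓛_{k+1}(x)` generated by the fields and their brackets of length ≤ `k+1`, for all `x`. -/
theorem example_hormander_condition (k : ℕ) (ω : (Fin 2 → ℝ) → ℝ) (hω : ContDiff ℝ (⊤ : ℕ∞) ω) :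
    let V1 : (Fin 4 → ℝ) → (Fin 4 → ℝ) := fun _ => Pi.single 3 1      -- ∂₄
    let V2 : (Fin 4 → ℝ) → (Fin 4 → ℝ) := fun _ => Pi.single 0 1      -- ∂₁
    let V3 : (Fin 4 → ℝ) → (Fin 4 → ℝ) :=
      fun x => (x 1) ^ k • (Pi.single 3 1 : Fin 4 → ℝ)                -- x₂^k ∂₄
    let V4 : (Fin 4 → ℝ) → (Fin 4 → ℝ) :=
      fun x => Real.cos (ω ![x 0, x 1]) • (Pi.single 1 1 : Fin 4 → ℝ) -- cos(ω)∂₂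
    let V5 : (Fin 4 → ℝ) → (Fin 4 → ℝ) :=
      fun x => Real.sin (ω ![x 0, x 1]) • (Pi.single 1 1 : Fin 4 → ℝ) -- sin(ω)∂₂
    let E2 : (Fin 4 → ℝ) → (Fin 4 → ℝ) := fun _ => Pi.single 1 1      -- ∂₂
    (∀ x : Fin 4 → ℝ,
        (Pi.single 1 1 : Fin 4 → ℝ) ∈ Submodule.span ℝ ({V4 x, V5 x} : Set (Fin 4 → ℝ))) ∧
    (∀ x : Fin 4 → ℝ, lieBracketVF4 V2 V3 x = 0) ∧
    (∀ x : Fin 4 → ℝ,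
        ((fun W => lieBracketVF4 E2 W)^[k] V3) x
          = (k.factorial : ℝ) • (Pi.single 3 1 : Fin 4 → ℝ)) ∧
    (∀ x : Fin 4 → ℝ,
        (Pi.single 0 1 : Fin 4 → ℝ) ∈
          Submodule.span ℝ
            ({V2 x, V4 x, V5 x, ((fun W => lieBracketVF4 E2 W)^[k] V3) x} :
              Set (Fin 4 → ℝ)) ∧
        (Pi.single 1 1 : Fin 4 → ℝ) ∈
          Submodule.span ℝ
            ({V2 x, V4 x, V5 x, ((fun W => lieBracketVF4 E2 W)^[k] V3) x} :
              Set (Fin 4 → ℝ)) ∧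
        (Pi.single 3 1 : Fin 4 → ℝ) ∈
          Submodule.span ℝ
            ({V2 x, V4 x, V5 x, ((fun W => lieBracketVF4 E2 W)^[k] V3) x} :
              Set (Fin 4 → ℝ))) := by
  intro V1 V2 V3 V4 V5 E2
  have span2 : ∀ (S : Set (Fin 4 → ℝ)) x, V4 x ∈ S → V5 x ∈ S →
      (Pi.single 1 1 : Fin 4 → ℝ) ∈ Submodule.span ℝ S := by
    intro S x h4 h5
    have key : (Pi.single 1 1 : Fin 4 → ℝ)
        = Real.cos (ω ![x 0, x 1]) • V4 x + Real.sin (ω ![x 0, x 1]) • V5 x := by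
      show (Pi.single 1 1 : Fin 4 → ℝ) = _ • _ • _ + _ • _ • _
      rw [smul_smul, smul_smul, ← add_smul, ← sq, ← sq, add_comm,
        Real.sin_sq_add_cos_sq, one_smul]
    rw [key]
    exact Submodule.add_mem _
      (Submodule.smul_mem _ _ (Submodule.subset_span h4))
      (Submodule.smul_mem _ _ (Submodule.subset_span h5))
  have hiter : ∀ x : Fin 4 → ℝ,
      ((fun W => lieBracketVF4 E2 W)^[k] V3) x
        = (k.factorial : ℝ) • (Pi.single 3 1 : Fin 4 → ℝ) := by
    intro x
    have := iter_lemma k k le_rfl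
    show ((fun W => lieBracketVF4 (fun _ => Pi.single 1 1) W)^[k]
      (fun x : Fin 4 → ℝ => (x 1) ^ k • (Pi.single 3 1 : Fin 4 → ℝ))) x = _
    rw [this]
    simp [Nat.descFactorial_self]
  refine ⟨fun x => span2 _ x (by simp) (by simp), ?_, hiter, ?_⟩
  · intro x
    have := bracket_V2V3 k
    show lieBracketVF4 (fun _ : Fin 4 → ℝ => Pi.single 0 1)
      (fun y : Fin 4 → ℝ => (y 1) ^ k • (Pi.single 3 1 : Fin 4 → ℝ)) x = 0
    rw [this]; rfl
  · intro x
    refine ⟨Submodule.subset_span (by simp [V2]), span2 _ x (by simp) (by simp), ?_⟩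
    have h : ((fun W => lieBracketVF4 E2 W)^[k] V3) x ∈
        ({V2 x, V4 x, V5 x, ((fun W => lieBracketVF4 E2 W)^[k] V3) x} :
          Set (Fin 4 → ℝ)) := by simp
    have hmem := Submodule.subset_span (R := ℝ) h
    rw [hiter x] at hmem
    have hne : ((k.factorial : ℝ)) ≠ 0 := Nat.cast_ne_zero.mpr k.factorial_ne_zero
    have := Submodule.smul_mem _ ((k.factorial : ℝ))⁻¹ hmem
    rw [inv_smul_smul₀ hne] at this
    rw [hiter x]
    exact this
end
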